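/- arXiv:math/0503477 — 6 statements merged into one kernel-verified Lean document; each statement's English description precedes it below -/
import Mathlib

section
/- Suppose the static planning problem min ρ subject to Rx = λ, Ax ≤ ρe, x ≥ 0 has a unique solution (ρ*, x*) with ρ* = 1 and Ax* = e, where x* = (x_B*, 0) with x_B* > 0 (the basic activities), and R = [H J], A = [B N] are partitioned accordingly with H, B having b columns. Assume there exist strictly positive vectors y ∈ ℝ^m and π ∈ ℝ^p with y'H = π'B. Then the (b+1) × (b+1) block matrix [[H, 0],[B, −e]] (with e the all-ones vector in ℝ^p and 0 in ℝ^m) is invertible. -/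
open Matrix

/-- Lemma 5: under the heavy traffic assumption (the static planning problem has the
unique optimal solution `(ρ*, x*) = (1, (x_B*, 0))` with `x_B* > 0` and `Ax* = e`),
complete resource pooling `m + p = b + 1`, and existence of strictly positive `y, π`
with `y'H = π'B`, the block matrix `[[H, 0], [B, -e]]` is invertible. -/
theorem stmt3 (m p b k : ℕ) (hmp : m + p = b + 1)
    (H : Matrix (Fin m) (Fin b) ℝ) (Jm : Matrix (Fin m) (Fin k) ℝ)
    (B : Matrix (Fin p) (Fin b) ℝ) (N : Matrix (Fin p) (Fin k) ℝ)
    (lam : Fin m → ℝ) (xB : Fin b → ℝ)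
    -- `A = [B N]` is a 0-1 matrix with exactly one nonzero entry per column
    (hA01 : ∀ i j, (fromCols B N) i j = 0 ∨ (fromCols B N) i j = 1)
    (hAcol : ∀ j, ∃! i, (fromCols B N) i j = 1)
    -- `x* = (x_B*, 0)` with `x_B* > 0` is feasible with `ρ* = 1`, `Ax* = e`
    (hxB : ∀ j, 0 < xB j)
    (hfeas : (fromCols H Jm).mulVec (Sum.elim xB 0) = lam)
    (hsat : (fromCols B N).mulVec (Sum.elim xB 0) = fun _ => 1)
    -- optimality: every feasible `(ρ, x)` has `ρ ≥ 1`
    (hopt : ∀ (ρ : ℝ) (x : Fin b ⊕ Fin k → ℝ),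
      (fromCols H Jm).mulVec x = lam → (∀ i, (fromCols B N).mulVec x i ≤ ρ) →
      (∀ j, 0 ≤ x j) → 1 ≤ ρ)
    -- uniqueness of the optimal solution
    (huniq : ∀ x : Fin b ⊕ Fin k → ℝ,
      (fromCols H Jm).mulVec x = lam → (∀ i, (fromCols B N).mulVec x i ≤ 1) →
      (∀ j, 0 ≤ x j) → x = Sum.elim xB 0)
    (y : Fin m → ℝ) (π : Fin p → ℝ) (hy : ∀ i, 0 < y i) (hπ : ∀ i, 0 < π i)
    (hdual : vecMul y H = vecMul π B) :
    Function.Bijective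
      ((fromBlocks H (0 : Matrix (Fin m) (Fin 1) ℝ) B (fun _ _ => -1)).mulVec) := by
  -- the key: the kernel is trivial
  have hkey : ∀ v : Fin b ⊕ Fin 1 → ℝ,
      (fromBlocks H (0 : Matrix (Fin m) (Fin 1) ℝ) B (fun _ _ => -1)).mulVec v = 0 → v = 0 := by
    intro v hv
    set u : Fin b → ℝ := fun j => v (Sum.inl j) with hu
    set c : ℝ := v (Sum.inr 0) with hc
    have hv' : v = Sum.elim u (fun _ => c) := by
      funext j
      cases j with
      | inl j => rfl
      | inr j => simp [hc, Subsingleton.elim j 0]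
    rw [hv'] at hv
    erw [fromBlocks_mulVec] at hv
    have hHu : H.mulVec u = 0 := by
      funext i
      have := congrFun hv (Sum.inl i)
      simpa using this
    have hBu : ∀ i, B.mulVec u i = c := by
      intro i
      have := congrFun hv (Sum.inr i)
      simp only [Sum.elim_inr, Pi.add_apply, Pi.zero_apply] at this
      simp only [Matrix.mulVec, dotProduct] at this ⊢
      simp at this
      linarith
    -- choose a positive ε with ε * |u j| ≤ xB j for all j
    set S : ℝ := ∑ j, |u j| / xB j with hS
    have hS0 : 0 ≤ S := Finset.sum_nonneg fun j _ =>
      div_nonneg (abs_nonneg _) (hxB j).le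
    set ε : ℝ := 1 / (1 + S) with hε
    have hεpos : 0 < ε := by positivity
    have hεbound : ∀ j, ε * |u j| ≤ xB j := by
      intro j
      have h1 : |u j| / xB j ≤ S :=
        Finset.single_le_sum (f := fun j => |u j| / xB j)
          (fun j _ => div_nonneg (abs_nonneg _) (hxB j).le) (Finset.mem_univ j)
      have h2 : ε * (|u j| / xB j) ≤ ε * S := by
        exact mul_le_mul_of_nonneg_left h1 hεpos.le
      have h3 : ε * S ≤ 1 := by
        rw [hε]
        rw [div_mul_eq_mul_div, div_le_one (by linarith)]
        linarith
      have h4 : ε * (|u j| / xB j) ≤ 1 := le_trans h2 h3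
      calc ε * |u j| = ε * (|u j| / xB j) * xB j := by
            rw [mul_assoc, div_mul_cancel₀ _ (hxB j).ne']
        _ ≤ 1 * xB j := mul_le_mul_of_nonneg_right h4 (hxB j).le
        _ = xB j := one_mul _
    -- feasibility of the perturbed solutions
    have hpert : ∀ t : ℝ, |t| ≤ ε → (1 : ℝ) ≤ 1 + t * c := by
      intro t ht
      refine hopt (1 + t * c) (Sum.elim (fun j => xB j + t * u j) 0) ?_ ?_ ?_
      · have : (fun j => xB j + t * u j) = xB + t • u := by
          funext j; simp [Pi.add_apply, Pi.smul_apply, smul_eq_mul]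
        rw [this, fromCols_mulVec_sumElim, Matrix.mulVec_add, Matrix.mulVec_smul, hHu]
        have hfeas' := hfeas
        rw [fromCols_mulVec_sumElim] at hfeas'
        simpa using hfeas'
      · intro i
        have : (fun j => xB j + t * u j) = xB + t • u := by
          funext j; simp [Pi.add_apply, Pi.smul_apply, smul_eq_mul]
        rw [this, fromCols_mulVec_sumElim, Matrix.mulVec_add, Matrix.mulVec_smul]
        have hsat' := hsat
        rw [fromCols_mulVec_sumElim] at hsat'
        have h1 := congrFun hsat' i
        simp only [Matrix.mulVec_zero, add_zero, Pi.add_apply, Pi.smul_apply, Pi.zero_apply,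
          smul_eq_mul] at h1 ⊢
        rw [h1, hBu i]
      · intro j
        cases j with
        | inl j =>
          simp only [Sum.elim_inl]
          have h1 : t * u j ≥ -(ε * |u j|) := by
            have := neg_abs_le (t * u j)
            have h2 : |t * u j| ≤ ε * |u j| := by
              rw [abs_mul]
              exact mul_le_mul_of_nonneg_right ht (abs_nonneg _)
            linarith
          have := hεbound j
          linarith
        | inr j => simp
    -- conclude c = 0
    have hc0 : c = 0 := by
      have h1 := hpert ε (by rw [abs_of_pos hεpos])
      have h2 := hpert (-ε) (by rw [abs_neg, abs_of_pos hεpos])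
      nlinarith
    -- conclude u = 0 by uniqueness
    have hu0 : u = 0 := by
      have hx := huniq (Sum.elim (fun j => xB j + ε * u j) 0) ?_ ?_ ?_
      · funext j
        have := congrFun hx (Sum.inl j)
        simp only [Sum.elim_inl] at this
        have : ε * u j = 0 := by linarith
        have := mul_eq_zero.mp this
        rcases this with h | h
        · exact absurd h hεpos.ne'
        · exact h
      · have : (fun j => xB j + ε * u j) = xB + ε • u := by
          funext j; simp [Pi.add_apply, Pi.smul_apply, smul_eq_mul]
        rw [this, fromCols_mulVec_sumElim, Matrix.mulVec_add, Matrix.mulVec_smul, hHu]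
        have hfeas' := hfeas
        rw [fromCols_mulVec_sumElim] at hfeas'
        simpa using hfeas'
      · intro i
        have : (fun j => xB j + ε * u j) = xB + ε • u := by
          funext j; simp [Pi.add_apply, Pi.smul_apply, smul_eq_mul]
        rw [this, fromCols_mulVec_sumElim, Matrix.mulVec_add, Matrix.mulVec_smul]
        have hsat' := hsat
        rw [fromCols_mulVec_sumElim] at hsat'
        have h1 := congrFun hsat' i
        simp only [Matrix.mulVec_zero, add_zero, Pi.add_apply, Pi.smul_apply, Pi.zero_apply,
          smul_eq_mul] at h1 ⊢
        rw [h1, hBu i, hc0]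
        simp
      · intro j
        cases j with
        | inl j =>
          simp only [Sum.elim_inl]
          have h1 : ε * u j ≥ -(ε * |u j|) := by
            have := neg_abs_le (u j)
            nlinarith [hεpos.le]
          have := hεbound j
          linarith
        | inr j => simp
    rw [hv', hu0, hc0]
    funext j
    cases j <;> simp
  -- injective
  have hinj : Function.Injective
      ((fromBlocks H (0 : Matrix (Fin m) (Fin 1) ℝ) B (fun _ _ => -1)).mulVec) := by
    intro a b' hab
    have := hkey (a - b') (by rw [Matrix.mulVec_sub, hab, sub_self])
    exact sub_eq_zero.mp this
  -- bijective via dimension count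
  have hdim : Module.finrank ℝ (Fin b ⊕ Fin 1 → ℝ) =
      Module.finrank ℝ (Fin m ⊕ Fin p → ℝ) := by
    simp [Module.finrank_fintype_fun_eq_card, Fintype.card_sum, hmp]
  have hlin : Function.Injective
      ((fromBlocks H (0 : Matrix (Fin m) (Fin 1) ℝ) B (fun _ _ => -1)).mulVecLin) := by
    exact hinj
  refine ⟨hinj, ?_⟩
  have := (LinearMap.injective_iff_surjective_of_finrank_eq_finrank hdim).mp hlin
  exact this
end

section
/- Under the heavy traffic and complete resource pooling assumptions, with strictly positive y ∈ ℝ^m, π ∈ ℝ^p satisfying y'H = π'B and π'e = 1, the (b+1) × (b+1) policy matrix Π = [[H, e_1],[B, 0]] is invertible, where e_1 is the first standard basis vector of ℝ^m. -/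
open Matrix

/-- Lemma 2: under heavy traffic and complete resource pooling (`m + p = b + 1`),
with strictly positive `y, π` satisfying `y'H = π'B` and `π'e = 1`, and the matrix
`[[H, 0], [B, -e]]` invertible (the previous lemma), the policy matrix
`Π = [[H, e₁], [B, 0]]` is invertible. -/
theorem stmt4 (m p b : ℕ) (hm : 0 < m) (hmp : m + p = b + 1)
    (H : Matrix (Fin m) (Fin b) ℝ) (B : Matrix (Fin p) (Fin b) ℝ)
    (y : Fin m → ℝ) (π : Fin p → ℝ) (hy : ∀ i, 0 < y i) (hπ : ∀ i, 0 < π i)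
    (hdual : vecMul y H = vecMul π B)
    (hπe : ∑ i, π i = 1)
    (hprev : Function.Bijective
      ((fromBlocks H (0 : Matrix (Fin m) (Fin 1) ℝ) B (fun _ _ => -1)).mulVec)) :
    Function.Bijective
      ((fromBlocks H
        (fun i _ => if (i : ℕ) = 0 then (1 : ℝ) else 0 : Matrix (Fin m) (Fin 1) ℝ)
        B 0).mulVec) := by
  set E1 : Matrix (Fin m) (Fin 1) ℝ :=
    (fun i _ => if (i : ℕ) = 0 then (1 : ℝ) else 0) with hE1
  set Pm := fromBlocks H E1 B (0 : Matrix (Fin p) (Fin 1) ℝ) with hPm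
  -- injectivity suffices
  have hker : ∀ v, Pm.mulVec v = 0 → v = 0 := by
    intro v hv0
    rw [show v = Sum.elim (v ∘ Sum.inl) (v ∘ Sum.inr) from by ext i; cases i <;> rfl]
    set x : Fin b → ℝ := v ∘ Sum.inl
    set ρ : Fin 1 → ℝ := v ∘ Sum.inr
    rw [fromBlocks_mulVec] at hv0
    have h1 : H *ᵥ x + E1 *ᵥ ρ = 0 := by
      funext i; exact congrFun hv0 (Sum.inl i)
    have h2 : B *ᵥ x = 0 := by
      funext i
      have := congrFun hv0 (Sum.inr i)
      simpa using this
    -- ρ = 0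
    have hy1 : y ⬝ᵥ (H *ᵥ x) = 0 := by
      rw [dotProduct_mulVec, hdual, ← dotProduct_mulVec, h2, dotProduct_zero]
    have hE1ρ : E1 *ᵥ ρ = fun i : Fin m => if (i : ℕ) = 0 then ρ 0 else 0 := by
      funext i
      simp [hE1, Matrix.mulVec, dotProduct, Fin.sum_univ_one]
    have hyE1 : y ⬝ᵥ (E1 *ᵥ ρ) = y ⟨0, hm⟩ * ρ 0 := by
      rw [hE1ρ]
      rw [dotProduct]
      rw [Finset.sum_eq_single (⟨0, hm⟩ : Fin m)]
      · simp
      · intro i _ hi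
        have : (i : ℕ) ≠ 0 := fun h => hi (Fin.ext h)
        simp [this]
      · simp
    have hρ0 : ρ 0 = 0 := by
      have := congrArg (fun w => y ⬝ᵥ w) h1
      simp only [dotProduct_add, dotProduct_zero, hy1, hyE1, zero_add] at this
      have hy0 := (hy ⟨0, hm⟩).ne'
      exact by
        rcases mul_eq_zero.mp this with h | h
        · exact absurd h hy0
        · exact h
    have hρ : ρ = 0 := by funext i; rw [Fin.eq_zero i]; exact hρ0
    have hHx : H *ᵥ x = 0 := by
      rw [hρ, mulVec_zero, add_zero] at h1; exact h1
    -- use the previous matrix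
    have hx : x = 0 := by
      have hM := hprev.injective
      have : (fromBlocks H (0 : Matrix (Fin m) (Fin 1) ℝ) B (fun _ _ => -1)) *ᵥ
          (Sum.elim x (0 : Fin 1 → ℝ)) =
          (fromBlocks H (0 : Matrix (Fin m) (Fin 1) ℝ) B (fun _ _ => -1)) *ᵥ 0 := by
        rw [mulVec_zero]
        erw [fromBlocks_mulVec]
        funext i
        cases i with
        | inl i => simp [hHx]
        | inr i => simp [h2, Matrix.mulVec, dotProduct]
      have := hM this
      funext j
      exact congrFun this (Sum.inl j)
    rw [hρ, hx]
    funext i; cases i <;> simp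
  have hinj : Function.Injective Pm.mulVec := by
    intro v w hvw
    have := hker (v - w) (by rw [mulVec_sub, hvw, sub_self])
    exact sub_eq_zero.mp this
  -- bijectivity from injectivity
  have hdim : Module.finrank ℝ (Fin b ⊕ Fin 1 → ℝ) = Module.finrank ℝ (Fin m ⊕ Fin p → ℝ) := by
    simp [Module.finrank_fintype_fun_eq_card, Fintype.card_sum]
    omega
  have : Function.Injective Pm.mulVecLin := hinj
  have hsurj := (LinearMap.injective_iff_surjective_of_finrank_eq_finrank hdim).mp this
  exact ⟨hinj, hsurj⟩
end

section
/- Let θ ∈ ℝ^m, l > 0, and C_0, C_1 > 0 with C_1 = C_0 · max_i(y_i/y_1), θ > C_1 l e. Given q ∈ ℝ^m of the form q = q̃ + α e_1 with α ≥ 0 and |q̃_i − θ_i| < (C_0/(2m)) l for all i, define (x_B l; z_1 − θ_1) = Π^{-1}(q + λl − θ; el). Then x_B ≥ (1/2) x_B* and z_1 ≥ θ_1/2 > 0, where C_0 = min_{j,i} x_j*/|(Π^{-1}(e_i;0))_j|. -/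
open Matrix

/-- Lemma 6: if `q = q̃ + α e₁` with `α ≥ 0` and `|q̃_i - θ_i| < (C₀/(2m)) l`,
`θ > C₁ l e` where `C₁ = C₀ max_i (y_i/y_1)` and `C₀` satisfies
`C₀ |(Π⁻¹(e_i;0))_j| ≤ x*_j`, then the plan `(x_B l; z₁ - θ₁) = Π⁻¹(q + λl - θ; el)`
satisfies `x_B ≥ x_B*/2` and `z₁ ≥ θ₁/2 > 0`. -/
theorem stmt6 (m p b : ℕ) (hm : 0 < m)
    (H : Matrix (Fin m) (Fin b) ℝ) (B : Matrix (Fin p) (Fin b) ℝ)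
    (y : Fin m → ℝ) (π : Fin p → ℝ) (lam : Fin m → ℝ)
    (xBstar : Fin b → ℝ)
    (hy : ∀ i, 0 < y i) (hπ : ∀ i, 0 < π i)
    (hdual : vecMul y H = vecMul π B)
    -- heavy traffic: `H x_B* = λ`, `B x_B* = e`, `x_B* > 0`
    (hHx : H.mulVec xBstar = lam) (hBx : B.mulVec xBstar = fun _ => 1)
    (hxBstar : ∀ j, 0 < xBstar j)
    -- the policy matrix `Π = [[H, e₁],[B, 0]]` is injective
    (hPi : Function.Injective
      ((fromBlocks H
        (fun i _ => if (i : ℕ) = 0 then (1 : ℝ) else 0 : Matrix (Fin m) (Fin 1) ℝ)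
        B 0).mulVec))
    -- `(w i; γ i) = Π⁻¹(e_i; 0)`
    (w : Fin m → Fin b → ℝ) (γ : Fin m → ℝ)
    (hw : ∀ i : Fin m,
      (fromBlocks H
        (fun i _ => if (i : ℕ) = 0 then (1 : ℝ) else 0 : Matrix (Fin m) (Fin 1) ℝ)
        B 0).mulVec (Sum.elim (w i) fun _ => γ i) =
      Sum.elim (fun i' : Fin m => if i' = i then (1 : ℝ) else 0) (0 : Fin p → ℝ))
    (hγ : ∀ i, γ i = y i / y ⟨0, hm⟩)
    -- the constants `C₀` and `C₁`
    (C0 C1 l : ℝ) (hC0pos : 0 < C0)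
    (hC0 : ∀ (i : Fin m) (j : Fin b), C0 * |w i j| ≤ xBstar j)
    (hC1 : C1 = C0 * ⨆ i : Fin m, y i / y ⟨0, hm⟩)
    (hl : 0 < l)
    (θ q qt : Fin m → ℝ) (α : ℝ) (hα : 0 ≤ α)
    (hθ : ∀ i, C1 * l < θ i)
    (hq : q = fun i => qt i + α * (if (i : ℕ) = 0 then 1 else 0))
    (hqt : ∀ i, |qt i - θ i| < C0 / (2 * m) * l)
    -- the plan: `(x_B l; z₁ - θ₁) = Π⁻¹(q + λ l - θ; e l)`
    (xB : Fin b → ℝ) (z1 : ℝ)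
    (hplan : (fromBlocks H
        (fun i _ => if (i : ℕ) = 0 then (1 : ℝ) else 0 : Matrix (Fin m) (Fin 1) ℝ)
        B 0).mulVec (Sum.elim (fun j => xB j * l) fun _ => z1 - θ ⟨0, hm⟩) =
      Sum.elim (fun i => q i + lam i * l - θ i) (fun _ => l)) :
    (∀ j, xBstar j / 2 ≤ xB j) ∧ θ ⟨0, hm⟩ / 2 ≤ z1 ∧ 0 < z1 := by

  set i0 : Fin m := ⟨0, hm⟩ with hi0
  set E : Matrix (Fin m) (Fin 1) ℝ :=
    (fun i _ => if (i : ℕ) = 0 then (1 : ℝ) else 0) with hE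
  set P := fromBlocks H E B (0 : Matrix (Fin p) (Fin 1) ℝ) with hPdef
  have hmR : (0:ℝ) < m := by exact_mod_cast hm
  -- Step 1: `Π (0; 1) = (e_{i0}; 0)`, hence `w i0 = 0` and `γ i0 = 1`.
  have hbase : P.mulVec (Sum.elim (0 : Fin b → ℝ) (fun _ => (1:ℝ))) =
      Sum.elim (fun i' : Fin m => if i' = i0 then (1 : ℝ) else 0) (0 : Fin p → ℝ) := by
    rw [hPdef, fromBlocks_mulVec]
    funext x
    cases x with
    | inl i =>
      simp [hE, hi0, mulVec, dotProduct, Fin.ext_iff]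
    | inr k =>
      simp [mulVec, dotProduct]
  have hw0 : Sum.elim (w i0) (fun _ => γ i0) =
      Sum.elim (0 : Fin b → ℝ) (fun _ => (1:ℝ)) := hPi ((hw i0).trans hbase.symm)
  have hwzero : ∀ j, w i0 j = 0 := fun j => congrFun hw0 (Sum.inl j)
  have hγ0 : γ i0 = 1 := congrFun hw0 (Sum.inr 0)
  -- Step 2: `Π (x_B*; 0) = (λ; e)`.
  have hstar : P.mulVec (Sum.elim xBstar (0 : Fin 1 → ℝ)) =
      Sum.elim lam (fun _ => (1:ℝ)) := by
    rw [hPdef, fromBlocks_mulVec]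
    funext x
    cases x with
    | inl i =>
      simp [hHx, mulVec_zero]
    | inr k =>
      simp [hBx, mulVec_zero]
  -- Step 3: linearity computation
  have hlin : P.mulVec (l • Sum.elim xBstar (0 : Fin 1 → ℝ) +
        ∑ i : Fin m, (q i - θ i) • Sum.elim (w i) (fun _ => γ i)) =
      Sum.elim (fun i => q i + lam i * l - θ i) (fun _ => l) := by
    have hrw : ∀ u : (Fin b ⊕ Fin 1) → ℝ, P.mulVec u = P.mulVecLin u :=
      fun u => (P.mulVecLin_apply u).symm
    rw [hrw, map_add, _root_.map_smul, map_sum]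
    simp only [mulVecLin_apply, mulVec_smul, hstar, hw]
    funext x
    cases x with
    | inl i' =>
      simp only [Pi.add_apply, Pi.smul_apply, Sum.elim_inl, Finset.sum_apply,
        smul_eq_mul, mul_ite, mul_one, mul_zero, Finset.sum_ite_eq,
        Finset.mem_univ, if_true]
      ring
    | inr k =>
      simp only [Pi.add_apply, Pi.smul_apply, Sum.elim_inr, Finset.sum_apply,
        smul_eq_mul, Pi.zero_apply, mul_zero, Finset.sum_const_zero, mul_one, add_zero]
  have hveq : Sum.elim (fun j => xB j * l) (fun _ => z1 - θ i0) =
      l • Sum.elim xBstar (0 : Fin 1 → ℝ) +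
        ∑ i : Fin m, (q i - θ i) • Sum.elim (w i) (fun _ => γ i) :=
    hPi (hplan.trans hlin.symm)
  have hxB : ∀ j, xB j * l = l * xBstar j + ∑ i, (q i - θ i) * w i j := by
    intro j
    have h := congrFun hveq (Sum.inl j)
    simpa [Finset.sum_apply] using h
  have hz : z1 - θ i0 = ∑ i, (q i - θ i) * γ i := by
    have h := congrFun hveq (Sum.inr 0)
    simpa [Finset.sum_apply] using h
  -- Step 4: split off the `α e₁` part.
  have hsplit : ∀ g : Fin m → ℝ,
      ∑ i, (q i - θ i) * g i = (∑ i, (qt i - θ i) * g i) + α * g i0 := by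
    intro g
    have hterm : ∀ i : Fin m, (q i - θ i) * g i =
        (qt i - θ i) * g i + (if i = i0 then α * g i else 0) := by
      intro i
      rw [hq]
      by_cases h : i = i0
      · have h0 : (i : ℕ) = 0 := by rw [h]
        simp only [h, h0, if_true, show ((i0 : Fin m) : ℕ) = 0 from rfl]
        ring
      · have h0 : (i : ℕ) ≠ 0 := fun hc => h (Fin.ext hc)
        simp only [h, h0, if_false]
        ring
    rw [Finset.sum_congr rfl (fun i _ => hterm i), Finset.sum_add_distrib,
      Finset.sum_ite_eq' Finset.univ i0 (fun i => α * g i)]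
    simp
  have hxB2 : ∀ j, xB j * l = l * xBstar j + ∑ i, (qt i - θ i) * w i j := by
    intro j
    rw [hxB j, hsplit (fun i => w i j)]
    simp [hwzero j]
  have hz2 : z1 = θ i0 + (∑ i, (qt i - θ i) * γ i) + α := by
    have h := hz
    rw [hsplit γ, hγ0] at h
    linarith
  -- Step 5: bounds
  have hcoef : (0:ℝ) ≤ C0 / (2 * m) * l := by positivity
  have hmne : (m:ℝ) ≠ 0 := ne_of_gt hmR
  have hbound1 : ∀ j, |∑ i, (qt i - θ i) * w i j| ≤ xBstar j * l / 2 := by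
    intro j
    calc |∑ i, (qt i - θ i) * w i j| ≤ ∑ i, |(qt i - θ i) * w i j| :=
          Finset.abs_sum_le_sum_abs _ _
      _ ≤ ∑ _i : Fin m, (l / (2 * m)) * xBstar j := by
          apply Finset.sum_le_sum
          intro i _
          rw [abs_mul]
          have h1 : |qt i - θ i| * |w i j| ≤ (C0 / (2 * m) * l) * |w i j| :=
            mul_le_mul_of_nonneg_right (le_of_lt (hqt i)) (abs_nonneg _)
          have h2 : (C0 / (2 * m) * l) * |w i j| = (l / (2 * m)) * (C0 * |w i j|) := by
            ring
          have h3 : (l / (2 * m)) * (C0 * |w i j|) ≤ (l / (2 * m)) * xBstar j :=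
            mul_le_mul_of_nonneg_left (hC0 i j) (by positivity)
          linarith
      _ = xBstar j * l / 2 := by
          rw [Finset.sum_const, Finset.card_univ, Fintype.card_fin, nsmul_eq_mul]
          field_simp
  have hxBge : ∀ j, xBstar j / 2 ≤ xB j := by
    intro j
    have h1 := hbound1 j
    have h2 := hxB2 j
    have h3 := neg_abs_le (∑ i, (qt i - θ i) * w i j)
    have h4 : xBstar j / 2 * l ≤ xB j * l := by linarith
    exact le_of_mul_le_mul_right h4 hl
  -- z₁ bound
  have hbdd : BddAbove (Set.range fun i : Fin m => y i / y i0) :=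
    Set.Finite.bddAbove (Set.finite_range _)
  have hS : ∀ i, γ i ≤ ⨆ i : Fin m, y i / y i0 := fun i => by
    rw [hγ i]; exact le_ciSup hbdd i
  have hS1 : (1:ℝ) ≤ ⨆ i : Fin m, y i / y i0 := hγ0 ▸ hS i0
  have hγnn : ∀ i, 0 ≤ γ i := fun i => by
    rw [hγ i]; exact div_nonneg (hy i).le (hy i0).le
  have hbound2 : |∑ i, (qt i - θ i) * γ i| ≤ C1 * l / 2 := by
    calc |∑ i, (qt i - θ i) * γ i| ≤ ∑ i, |(qt i - θ i) * γ i| :=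
          Finset.abs_sum_le_sum_abs _ _
      _ ≤ ∑ _i : Fin m, (C0 / (2 * m) * l) * (⨆ i : Fin m, y i / y i0) := by
          apply Finset.sum_le_sum
          intro i _
          rw [abs_mul, abs_of_nonneg (hγnn i)]
          have h1 : |qt i - θ i| * γ i ≤ (C0 / (2 * m) * l) * γ i :=
            mul_le_mul_of_nonneg_right (le_of_lt (hqt i)) (hγnn i)
          have h2 : (C0 / (2 * m) * l) * γ i ≤
              (C0 / (2 * m) * l) * (⨆ i : Fin m, y i / y i0) :=
            mul_le_mul_of_nonneg_left (hS i) hcoef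
          linarith
      _ = C1 * l / 2 := by
          rw [Finset.sum_const, Finset.card_univ, Fintype.card_fin, nsmul_eq_mul, hC1]
          field_simp
  have hC1pos : 0 < C1 := by
    rw [hC1]
    nlinarith [hS1, hC0pos]
  have hθ0 := hθ i0
  have h3 := neg_abs_le (∑ i, (qt i - θ i) * γ i)
  have hC1l : 0 < C1 * l := mul_pos hC1pos hl
  have hzge : θ i0 / 2 ≤ z1 := by linarith
  have hzpos : 0 < z1 := by linarith
  exact ⟨hxBge, hzge, hzpos⟩
end

section
/- In the discrete review policy Case 1: given q with q_1 > θ_1 − δl and |q_i − θ_i| < δl for i ≥ 2, set T = l + max(0, y'(θ − q)), and let (x_B l; z_1 − θ_1) = Π^{-1}(q + λT − θ; el), z = q + λT − Rxl with x = (x_B; 0). Then z = θ + (1/y_1)·max(0, y'(q − θ))·e_1; in particular z_k = θ_k for k = 2,…,m. -/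
open Matrix

/-- Lemma 3 (Case 1 of the discrete review policy): given `q ∈ B_{δl}(θ)`,
`T = l + [y'(θ - q)]⁺`, and the plan `(x_B l; z₁ - θ₁) = Π⁻¹(q + λT - θ; el)`,
the target state `z = q + λT - Rxl` with `x = (x_B; 0)` satisfies
`z = θ + (1/y₁)[y'(q - θ)]⁺ e₁`; in particular `z_k = θ_k` for `k = 2,…,m`. -/
theorem stmt7 (m p b k : ℕ) (hm : 0 < m)
    (H : Matrix (Fin m) (Fin b) ℝ) (Jm : Matrix (Fin m) (Fin k) ℝ)
    (B : Matrix (Fin p) (Fin b) ℝ)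
    (y : Fin m → ℝ) (π : Fin p → ℝ) (lam : Fin m → ℝ)
    (hy : ∀ i, 0 < y i) (hπ : ∀ i, 0 < π i)
    (hdual : vecMul y H = vecMul π B)
    (hπe : ∑ i, π i = 1)
    (hylam : y ⬝ᵥ lam = 1)
    (l δ : ℝ) (hl : 0 < l) (hδ : 0 < δ)
    (θ q : Fin m → ℝ)
    -- `q ∈ B_{δl}(θ)`
    (hq1 : θ ⟨0, hm⟩ - δ * l < q ⟨0, hm⟩)
    (hqi : ∀ i : Fin m, i ≠ ⟨0, hm⟩ → |q i - θ i| < δ * l)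
    (Texe : ℝ) (hT : Texe = l + max 0 (y ⬝ᵥ (θ - q)))
    (xB : Fin b → ℝ) (z1 : ℝ)
    (hplan : (fromBlocks H
        (fun i _ => if (i : ℕ) = 0 then (1 : ℝ) else 0 : Matrix (Fin m) (Fin 1) ℝ)
        B 0).mulVec (Sum.elim (fun j => xB j * l) fun _ => z1 - θ ⟨0, hm⟩) =
      Sum.elim (fun i => q i + lam i * Texe - θ i) (fun _ => l))
    (z : Fin m → ℝ)
    (hz : z = fun i =>
      q i + lam i * Texe - l * (fromCols H Jm).mulVec (Sum.elim xB 0) i) :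
    z = (fun i => θ i +
        (if (i : ℕ) = 0 then max 0 (y ⬝ᵥ (q - θ)) / y ⟨0, hm⟩ else 0)) ∧
      ∀ i : Fin m, i ≠ ⟨0, hm⟩ → z i = θ i := by
  set i0 : Fin m := ⟨0, hm⟩ with hi0
  set c : ℝ := z1 - θ i0 with hc
  set Hx : Fin m → ℝ := H.mulVec xB with hHx
  have hsmul : (fun j => xB j * l) = l • xB := by
    funext j; simp [mul_comm]
  -- top block equations
  have htop : ∀ i : Fin m, l * Hx i + (if (i : ℕ) = 0 then (1:ℝ) else 0) * c
      = q i + lam i * Texe - θ i := by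
    intro i
    have h := congrFun hplan (Sum.inl i)
    simp only [mulVec, dotProduct, Fintype.sum_sum_type, Sum.elim_inl, Sum.elim_inr,
      fromBlocks_apply₁₁, fromBlocks_apply₁₂, Fin.sum_univ_one, fromBlocks, of_apply] at h
    rw [← h]
    congr 1
    rw [hHx]
    simp only [mulVec, dotProduct, Finset.mul_sum]
    exact Finset.sum_congr rfl fun j _ => by ring
  -- bottom block equations
  have hbot : ∀ j : Fin p, B.mulVec xB j = 1 := by
    intro j
    have h := congrFun hplan (Sum.inr j)
    simp only [mulVec, dotProduct, Fintype.sum_sum_type, Sum.elim_inl, Sum.elim_inr,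
      fromBlocks_apply₂₁, fromBlocks_apply₂₂, fromBlocks, of_apply, Matrix.zero_apply, zero_mul,
      Finset.sum_const_zero, add_zero] at h
    have h2 : (∑ j' : Fin b, B j j' * xB j') * l = 1 * l := by
      rw [one_mul, Finset.sum_mul]
      refine Eq.trans ?_ h
      exact Finset.sum_congr rfl fun j' _ => by ring
    have := mul_right_cancel₀ hl.ne' h2
    simpa [mulVec, dotProduct] using this
  -- z in terms of Hx
  have hzi : ∀ i, z i = q i + lam i * Texe - l * Hx i := by
    intro i
    rw [hz]
    congr 2
    rw [fromCols_mulVec_sumElim]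
    simp [hHx]
  have hzθ : ∀ i, z i = θ i + (if (i : ℕ) = 0 then (1:ℝ) else 0) * c := by
    intro i
    have h := htop i
    rw [hzi i]
    linarith [h]
  -- the key scalar identity via y
  have hyHx : y ⬝ᵥ Hx = 1 := by
    rw [hHx, dotProduct_mulVec, hdual, ← dotProduct_mulVec]
    have : π ⬝ᵥ B.mulVec xB = ∑ i, π i := by
      unfold dotProduct
      exact Finset.sum_congr rfl fun i _ => by rw [hbot i, mul_one]
    rw [this, hπe]
  have hsum : l + y i0 * c = (y ⬝ᵥ (q - θ)) + Texe := by
    have hL : ∑ i, y i * (l * Hx i + (if (i : ℕ) = 0 then (1:ℝ) else 0) * c)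
        = l * (y ⬝ᵥ Hx) + y i0 * c := by
      have step : ∀ i : Fin m, y i * (l * Hx i + (if (i : ℕ) = 0 then (1:ℝ) else 0) * c)
          = l * (y i * Hx i) + (if i = i0 then y i * c else 0) := by
        intro i
        by_cases h : i = i0
        · have : (i : ℕ) = 0 := by rw [h]
          simp [h, this, hi0]; ring
        · have : (i : ℕ) ≠ 0 := fun h0 => h (Fin.ext h0)
          simp [h, this]; ring
      rw [Finset.sum_congr rfl fun i _ => step i, Finset.sum_add_distrib,
        Finset.sum_ite_eq' Finset.univ i0 (fun i => y i * c)]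
      simp [dotProduct, Finset.mul_sum]
    have hR : ∑ i, y i * (q i + lam i * Texe - θ i)
        = (y ⬝ᵥ (q - θ)) + Texe := by
      have : ∑ i, y i * (q i + lam i * Texe - θ i)
          = (∑ i, y i * (q i - θ i)) + (∑ i, y i * lam i) * Texe := by
        rw [Finset.sum_mul, ← Finset.sum_add_distrib]
        exact Finset.sum_congr rfl fun i _ => by ring
      rw [this]
      unfold dotProduct at hylam ⊢
      simp [hylam, Pi.sub_apply]
    have := Finset.sum_congr rfl fun i (_ : i ∈ Finset.univ) =>
      congrArg (fun t => y i * t) (htop i)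
    rw [hL, hR] at this
    rw [hyHx, mul_one] at this
    exact this
  have hθq : y ⬝ᵥ (θ - q) = -(y ⬝ᵥ (q - θ)) := by
    unfold dotProduct
    rw [← Finset.sum_neg_distrib]
    exact Finset.sum_congr rfl fun i _ => by simp [Pi.sub_apply]; ring
  have hkey : y i0 * c = max 0 (y ⬝ᵥ (q - θ)) := by
    set a := y ⬝ᵥ (q - θ)
    have : l + y i0 * c = a + (l + max 0 (-a)) := by
      rw [hsum, hT, hθq]
    have h2 : y i0 * c = a + max 0 (-a) := by linarith
    rw [h2]
    rcases le_total a 0 with h | h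
    · rw [max_eq_right (by linarith), max_eq_left h]; ring
    · rw [max_eq_left (by linarith), max_eq_right h]; ring
  have hcval : c = max 0 (y ⬝ᵥ (q - θ)) / y i0 := by
    rw [eq_div_iff (hy i0).ne']
    linarith [hkey]
  constructor
  · funext i
    rw [hzθ i]
    by_cases h : (i : ℕ) = 0
    · simp [h, hcval]
    · simp [h]
  · intro i hi
    have : (i : ℕ) ≠ 0 := fun h => hi (Fin.ext h)
    rw [hzθ i]
    simp [this]
end

section
/- In the discrete review policy Case 2: given q̃ ≥ 0 with y'q̃ ≥ y'θ, define the stretching coefficient C_s = max(1, max_{j≤b} |(1/l)([I,0]Π^{-1}(θ − q̃; 0))_j| / x_j*), z_1 = y'(q̃ − θ)/y_1 + θ_1, and x_B = x_B*(1 − 1/C_s) + (1/(C_s l))[I,0]Π^{-1}(q̃ + λl − θ; el), x = (x_B; 0). Then x ≥ 0, Ax ≤ e, and z := q̃ + λC_s l − RxC_s l satisfies z_k = θ_k for all k = 2,…,m. -/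
open Matrix

/-- Lemma 4 (Case 2 of the discrete review policy): given `q̃ ≥ 0` with `y'q̃ ≥ y'θ`,
the stretched plan with coefficient `C_s`, rates
`x_B = x_B*(1 - 1/C_s) + (1/(C_s l))[I,0]Π⁻¹(q̃ + λl - θ; el)` and `x = (x_B; 0)`
satisfies `x ≥ 0`, `Ax ≤ e`, and `z = q̃ + λ C_s l - R x C_s l` has `z_k = θ_k`
for `k = 2,…,m`. -/
theorem stmt8 (m p b k : ℕ) (hm : 0 < m) (hb : 0 < b)
    (H : Matrix (Fin m) (Fin b) ℝ) (Jm : Matrix (Fin m) (Fin k) ℝ)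
    (B : Matrix (Fin p) (Fin b) ℝ) (N : Matrix (Fin p) (Fin k) ℝ)
    (y : Fin m → ℝ) (π : Fin p → ℝ) (lam : Fin m → ℝ)
    (xBstar : Fin b → ℝ)
    (hy : ∀ i, 0 < y i) (hπ : ∀ i, 0 < π i)
    (hdual : vecMul y H = vecMul π B)
    (hπe : ∑ i, π i = 1)
    (hylam : y ⬝ᵥ lam = 1)
    -- heavy traffic: `H x_B* = λ`, `B x_B* = e`, `x_B* > 0`
    (hHx : H.mulVec xBstar = lam) (hBx : B.mulVec xBstar = fun _ => 1)
    (hxBstar : ∀ j, 0 < xBstar j)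
    -- the policy matrix `Π = [[H, e₁],[B, 0]]` is injective
    (hPi : Function.Injective
      ((fromBlocks H
        (fun i _ => if (i : ℕ) = 0 then (1 : ℝ) else 0 : Matrix (Fin m) (Fin 1) ℝ)
        B 0).mulVec))
    (l : ℝ) (hl : 0 < l)
    (θ qt : Fin m → ℝ) (hqt : ∀ i, 0 ≤ qt i)
    (hwork : y ⬝ᵥ θ ≤ y ⬝ᵥ qt)
    -- `(u; γ₀) = Π⁻¹(θ - q̃; 0)`
    (u : Fin b → ℝ) (γ0 : ℝ)
    (hu : (fromBlocks H
        (fun i _ => if (i : ℕ) = 0 then (1 : ℝ) else 0 : Matrix (Fin m) (Fin 1) ℝ)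
        B 0).mulVec (Sum.elim u fun _ => γ0) =
      Sum.elim (fun i => θ i - qt i) (fun _ => 0))
    -- `(v; ζ) = Π⁻¹(q̃ + λ l - θ; e l)`
    (v : Fin b → ℝ) (ζ : ℝ)
    (hv : (fromBlocks H
        (fun i _ => if (i : ℕ) = 0 then (1 : ℝ) else 0 : Matrix (Fin m) (Fin 1) ℝ)
        B 0).mulVec (Sum.elim v fun _ => ζ) =
      Sum.elim (fun i => qt i + lam i * l - θ i) (fun _ => l))
    -- the stretching coefficient
    (Cs : ℝ) (hCs : Cs = max 1 (⨆ j : Fin b, |u j / l| / xBstar j))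
    (z1 : ℝ) (hz1 : z1 = y ⬝ᵥ (qt - θ) / y ⟨0, hm⟩ + θ ⟨0, hm⟩)
    (xB : Fin b → ℝ)
    (hxB : xB = fun j => xBstar j * (1 - 1 / Cs) + 1 / (Cs * l) * v j)
    (z : Fin m → ℝ)
    (hz : z = fun i => qt i + lam i * (Cs * l) -
      Cs * l * (fromCols H Jm).mulVec (Sum.elim xB 0) i) :
    (∀ j : Fin b ⊕ Fin k, 0 ≤ Sum.elim xB (0 : Fin k → ℝ) j) ∧
    (∀ i, (fromCols B N).mulVec (Sum.elim xB (0 : Fin k → ℝ)) i ≤ 1) ∧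
    (∀ i : Fin m, i ≠ ⟨0, hm⟩ → z i = θ i) := by
  classical
  have hCs1 : (1:ℝ) ≤ Cs := by rw [hCs]; exact le_max_left _ _
  have hCs0 : (0:ℝ) < Cs := lt_of_lt_of_le one_pos hCs1
  have hCsne : Cs ≠ 0 := ne_of_gt hCs0
  have hlne : l ≠ 0 := ne_of_gt hl
  rw [(Matrix.fromBlocks_mulVec H (fun i _ => if (i : ℕ) = 0 then (1 : ℝ) else 0 : Matrix (Fin m) (Fin 1) ℝ) B 0)] at hu
  rw [(Matrix.fromBlocks_mulVec H (fun i _ => if (i : ℕ) = 0 then (1 : ℝ) else 0 : Matrix (Fin m) (Fin 1) ℝ) B 0)] at hv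
  have hu1 : ∀ i, H.mulVec u i + (if (i : ℕ) = 0 then γ0 else 0) = θ i - qt i := by
    intro i
    have h := congrFun hu (Sum.inl i)
    simp only [Sum.elim_inl, Pi.add_apply] at h
    simpa [Matrix.mulVec, dotProduct, Fin.sum_univ_one, ite_mul, one_mul,
      zero_mul] using h
  have hu2 : ∀ i, B.mulVec u i = 0 := by
    intro i
    have h := congrFun hu (Sum.inr i)
    simpa [Matrix.mulVec, dotProduct] using h
  have hv1 : ∀ i, H.mulVec v i + (if (i : ℕ) = 0 then ζ else 0) =
      qt i + lam i * l - θ i := by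
    intro i
    have h := congrFun hv (Sum.inl i)
    simp only [Sum.elim_inl, Pi.add_apply] at h
    simpa [Matrix.mulVec, dotProduct, Fin.sum_univ_one, ite_mul, one_mul,
      zero_mul] using h
  have hv2 : ∀ i, B.mulVec v i = l := by
    intro i
    have h := congrFun hv (Sum.inr i)
    simpa [Matrix.mulVec, dotProduct] using h
  -- identify `v` via injectivity
  have hkey : (Sum.elim v (fun _ => ζ) : Fin b ⊕ Fin 1 → ℝ)
      = Sum.elim (fun j => l * xBstar j - u j) (fun _ => -γ0) := by
    apply hPi
    rw [(Matrix.fromBlocks_mulVec H (fun i _ => if (i : ℕ) = 0 then (1 : ℝ) else 0 : Matrix (Fin m) (Fin 1) ℝ) B 0), (Matrix.fromBlocks_mulVec H (fun i _ => if (i : ℕ) = 0 then (1 : ℝ) else 0 : Matrix (Fin m) (Fin 1) ℝ) B 0)]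
    simp only [Sum.elim_comp_inl, Sum.elim_comp_inr]
    have hw : (fun j => l * xBstar j - u j) = l • xBstar - u := by
      funext j; simp
    have he1 : ∀ (c : ℝ) (i : Fin m),
        Matrix.mulVec (fun i _ => if (i : ℕ) = 0 then (1:ℝ) else 0 :
          Matrix (Fin m) (Fin 1) ℝ) (fun _ => c) i
        = (if (i : ℕ) = 0 then c else 0) := by
      intro c i
      simp [Matrix.mulVec, dotProduct, Fin.sum_univ_one, ite_mul]
    funext x
    cases x with
    | inl i =>
      simp only [Sum.elim_inl, Pi.add_apply]
      have hHw : H.mulVec (fun j => l * xBstar j - u j) i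
          = l * lam i - H.mulVec u i := by
        rw [hw, Matrix.mulVec_sub, Matrix.mulVec_smul, hHx]; simp
      rw [he1, he1, hHw]
      have h1 := hu1 i
      have h2 := hv1 i
      by_cases h0 : (i : ℕ) = 0
      · simp only [if_pos h0] at h1 h2 ⊢; linarith
      · simp only [if_neg h0] at h1 h2 ⊢; linarith
    | inr i =>
      simp only [Sum.elim_inr, Pi.add_apply, Matrix.zero_mulVec, Pi.zero_apply]
      have hBw : B.mulVec (fun j => l * xBstar j - u j) i
          = l * 1 - B.mulVec u i := by
        rw [hw, Matrix.mulVec_sub, Matrix.mulVec_smul, hBx]; simp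
      rw [hBw, hv2 i, hu2 i]
      ring
  have hveq : ∀ j, v j = l * xBstar j - u j := fun j => congrFun hkey (Sum.inl j)
  have hζeq : ζ = -γ0 := congrFun hkey (Sum.inr ⟨0, Nat.one_pos⟩)
  -- bound from the stretching coefficient
  have hbound : ∀ j, |u j| ≤ Cs * l * xBstar j := by
    intro j
    have h1 : |u j / l| / xBstar j ≤ Cs := by
      rw [hCs]
      exact le_trans (le_ciSup (f := fun j => |u j / l| / xBstar j)
        (Set.Finite.bddAbove (Set.finite_range _)) j) (le_max_right _ _)
    have h2 : |u j / l| ≤ Cs * xBstar j := by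
      have := (div_le_iff₀ (hxBstar j)).mp h1
      linarith
    rw [abs_div, abs_of_pos hl] at h2
    have := (div_le_iff₀ hl).mp h2
    nlinarith
  have hxBeq : ∀ j, xB j = (Cs * l * xBstar j - u j) / (Cs * l) := by
    intro j
    rw [hxB]
    have := hveq j
    field_simp
    rw [this]
    ring
  refine ⟨?_, ?_, ?_⟩
  · rintro (j | j)
    · simp only [Sum.elim_inl]
      rw [hxBeq j]
      apply div_nonneg _ (le_of_lt (mul_pos hCs0 hl))
      have := hbound j
      have := le_abs_self (u j)
      linarith
    · simp
  · intro i
    rw [Matrix.fromCols_mulVec_sumElim]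
    have hxBsmul : xB = (1 - 1 / Cs) • xBstar + (1 / (Cs * l)) • v := by
      funext j; rw [hxB]; simp [mul_comm]
    rw [hxBsmul, Matrix.mulVec_add, Matrix.mulVec_smul, Matrix.mulVec_smul, hBx,
      Matrix.mulVec_zero]
    have := hv2 i
    simp only [Pi.add_apply, Pi.smul_apply, Pi.zero_apply, smul_eq_mul, this]
    have : (1 - 1 / Cs) * 1 + 1 / (Cs * l) * l = 1 := by field_simp; ring
    rw [this]
    norm_num
  · intro i hi
    have hi0 : (i : ℕ) ≠ 0 := fun h => hi (Fin.ext h)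
    rw [hz]
    simp only
    rw [Matrix.fromCols_mulVec_sumElim, Matrix.mulVec_zero]
    have hxBsmul : xB = (1 - 1 / Cs) • xBstar + (1 / (Cs * l)) • v := by
      funext j; rw [hxB]; simp [mul_comm]
    rw [hxBsmul, Matrix.mulVec_add, Matrix.mulVec_smul, Matrix.mulVec_smul, hHx]
    have hvi : H.mulVec v i = qt i + lam i * l - θ i := by
      have := hv1 i
      simpa [hi0] using this
    simp only [Pi.add_apply, Pi.zero_apply, Pi.smul_apply, smul_eq_mul, hvi,
      add_zero]
    field_simp
    ring
end

section
/- Let R = [H J], A = [B N] with y'H = π'B and η' := π'N − y'J ≥ 0, y ∈ ℝ^m, π ∈ ℝ^p with π ≥ 0, π'e = 1, y'λ = 1. Let T̄ : [0,∞) → ℝ^n be nondecreasing with A(T̄(t₂) − T̄(t₁)) ≤ (t₂−t₁)e, and define W(s) = y'(λs − R T̄(s)). Then W is nondecreasing: for t₂ ≥ t₁, W(t₂) − W(t₁) = (t₂ − t₁) − π'A(T̄(t₂) − T̄(t₁)) + η'(T̄_N(t₂) − T̄_N(t₁)) ≥ 0, where T̄_N denotes the last n−b coordinates of T̄. -/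
open Matrix

/-- The fluid workload `W(s) = y'(λs - R T̄(s))` is nondecreasing for any admissible
allocation `T̄`, given `y'H = π'B`, `η' = π'N - y'J ≥ 0`, `π ≥ 0`, `π'e = 1`, and
`y'λ = 1`. -/
theorem stmt16 (m p b k : ℕ)
    (H : Matrix (Fin m) (Fin b) ℝ) (Jm : Matrix (Fin m) (Fin k) ℝ)
    (B : Matrix (Fin p) (Fin b) ℝ) (N : Matrix (Fin p) (Fin k) ℝ)
    (y : Fin m → ℝ) (π : Fin p → ℝ) (lam : Fin m → ℝ)
    (hdual : vecMul y H = vecMul π B)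
    (hη : ∀ j, 0 ≤ (vecMul π N - vecMul y Jm) j)
    (hπ : ∀ i, 0 ≤ π i) (hπe : ∑ i, π i = 1)
    (hylam : y ⬝ᵥ lam = 1)
    (Tb : ℝ → (Fin b ⊕ Fin k) → ℝ)
    (hmono : ∀ j, Monotone fun s => Tb s j)
    (hcap : ∀ t1 t2 : ℝ, t1 ≤ t2 →
      ∀ i, (fromCols B N).mulVec (Tb t2 - Tb t1) i ≤ t2 - t1) :
    ∀ t1 t2 : ℝ, t1 ≤ t2 →
      y ⬝ᵥ (t1 • lam - (fromCols H Jm).mulVec (Tb t1)) ≤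
        y ⬝ᵥ (t2 • lam - (fromCols H Jm).mulVec (Tb t2)) := by
  intro t1 t2 h
  set ΔT : (Fin b ⊕ Fin k) → ℝ := Tb t2 - Tb t1 with hΔT
  have hΔ : ∀ j, 0 ≤ ΔT j := fun j => sub_nonneg.2 (hmono j h)
  -- bound π'A ΔT ≤ t2 - t1
  have h1 : π ⬝ᵥ (fromCols B N).mulVec ΔT ≤ t2 - t1 := by
    calc π ⬝ᵥ (fromCols B N).mulVec ΔT
        ≤ ∑ i, π i * (t2 - t1) :=
          Finset.sum_le_sum fun i _ =>
            mul_le_mul_of_nonneg_left (hcap t1 t2 h i) (hπ i)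
      _ = t2 - t1 := by rw [← Finset.sum_mul, hπe, one_mul]
  -- nonnegativity of η' ΔT_N
  have h2 : 0 ≤ ∑ j, (vecMul π N - vecMul y Jm) j * ΔT (Sum.inr j) :=
    Finset.sum_nonneg fun j _ => mul_nonneg (hη j) (hΔ _)
  -- decompose dot products over the sum type
  have hyR : y ⬝ᵥ (fromCols H Jm).mulVec ΔT ≤ t2 - t1 := by
    have hπA : π ⬝ᵥ (fromCols B N).mulVec ΔT =
        (∑ j, vecMul π B j * ΔT (Sum.inl j)) + ∑ j, vecMul π N j * ΔT (Sum.inr j) := by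
      rw [dotProduct_mulVec, vecMul_fromCols]
      simp [dotProduct, Fintype.sum_sum_type]
    have hyRe : y ⬝ᵥ (fromCols H Jm).mulVec ΔT =
        (∑ j, vecMul y H j * ΔT (Sum.inl j)) + ∑ j, vecMul y Jm j * ΔT (Sum.inr j) := by
      rw [dotProduct_mulVec, vecMul_fromCols]
      simp [dotProduct, Fintype.sum_sum_type]
    have hsub : ∑ j, (vecMul π N - vecMul y Jm) j * ΔT (Sum.inr j) =
        (∑ j, vecMul π N j * ΔT (Sum.inr j)) - ∑ j, vecMul y Jm j * ΔT (Sum.inr j) := by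
      rw [← Finset.sum_sub_distrib]
      congr 1; ext j; simp [sub_mul]
    rw [hsub] at h2
    rw [hyRe, hdual]
    linarith [hπA ▸ h1]
  -- expand the difference of workloads
  have hexp : y ⬝ᵥ (t2 • lam - (fromCols H Jm).mulVec (Tb t2)) -
      y ⬝ᵥ (t1 • lam - (fromCols H Jm).mulVec (Tb t1)) =
      (t2 - t1) * (y ⬝ᵥ lam) - y ⬝ᵥ (fromCols H Jm).mulVec ΔT := by
    rw [hΔT, mulVec_sub]
    simp only [dotProduct_sub, dotProduct_smul, smul_eq_mul]
    ring
  rw [hylam] at hexp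
  linarith
end
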